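/- Let A = (T_{j−k}) be an upper triangular Toeplitz matrix with entries in B(H) (T_l = 0 for l < 0) satisfying sup_{l≥0}‖T_l‖ < ∞, and let G_A(z) = ∑_{l≥0} T_l z^l for |z|<1. If G_A belongs to H¹(𝔻, B(H)) (i.e. sup_{0<r<1} (1/2π)∫₀^{2π}‖G_A(re^{it})‖dt < ∞), then A is a right Schur multiplier with ‖A‖_{M_r(ℓ²(H))} ≤ ‖G_A‖_{H¹(𝔻,B(H))}. -/

import Mathlib

/-!
For `0 < r < 1` the Poisson mean `P_r(A) = (r^{j-k} T_{j-k})` is the Toeplitz matrix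
`(ĝ_r(j - k))` of Fourier coefficients of the continuous function `g_r(t) = G_A(r e^{it})`.
Since `ĝ(j - k) = (2π)⁻¹ ∫ e^{-ijt} e^{ikt} g(t) dt`, Schur-multiplying `B` by such a Toeplitz
matrix averages over `t` the matrices `(B_{kj} g(t))`, conjugated by the diagonal unitaries
`diag(e^{-ijt})`. Schur multiplication by the constant matrix `g(t)` has norm at most `‖g(t)‖`,
so the multiplier norm of `P_r(A)` is at most `(2π)⁻¹ ∫ ‖g_r‖ ≤ C`. Multiplier bounds pass to
entrywise limits, and `P_r(A) → A` entrywise as `r → 1`.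
-/

open Finset Filter

noncomputable section

variable {H : Type*} [NormedAddCommGroup H] [InnerProductSpace ℂ H]
  [CompleteSpace H] [TopologicalSpace.SeparableSpace H]

/-- `A` defines a bounded operator on `ℓ²(H)` with norm at most `C`, expressed through
uniform bounds of the associated bilinear form on finitely supported sequences. -/
def SchurBoundedBy (A : ℕ → ℕ → (H →L[ℂ] H)) (C : ℝ) : Prop :=
  ∀ (F G : Finset ℕ) (x y : ℕ → H),
    ‖∑ k ∈ G, ∑ j ∈ F, (inner ℂ (A k j (x j)) (y k) : ℂ)‖ ≤
      C * Real.sqrt (∑ j ∈ F, ‖x j‖ ^ 2) * Real.sqrt (∑ k ∈ G, ‖y k‖ ^ 2)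

/-- `A ∈ B(ℓ²(H))`. -/
def MemB (A : ℕ → ℕ → (H →L[ℂ] H)) : Prop :=
  ∃ C, 0 ≤ C ∧ SchurBoundedBy A C

/-- The Schur product of two operator matrices: entrywise composition. -/
def schur (A B : ℕ → ℕ → (H →L[ℂ] H)) : ℕ → ℕ → (H →L[ℂ] H) :=
  fun k j => (A k j).comp (B k j)

/-- `A` is a right Schur multiplier with multiplier norm at most `C`. -/
def MrBoundedBy (A : ℕ → ℕ → (H →L[ℂ] H)) (C : ℝ) : Prop :=
  ∀ (B : ℕ → ℕ → (H →L[ℂ] H)) (D : ℝ), 0 ≤ D → SchurBoundedBy B D →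
    SchurBoundedBy (schur B A) (C * D)

/-- `A` is a left Schur multiplier with multiplier norm at most `C`. -/
def MlBoundedBy (A : ℕ → ℕ → (H →L[ℂ] H)) (C : ℝ) : Prop :=
  ∀ (B : ℕ → ℕ → (H →L[ℂ] H)) (D : ℝ), 0 ≤ D → SchurBoundedBy B D →
    SchurBoundedBy (schur A B) (C * D)

/-- `A ∈ M_r(ℓ²(H))`. -/
def MemMr (A : ℕ → ℕ → (H →L[ℂ] H)) : Prop :=
  ∃ C, 0 ≤ C ∧ MrBoundedBy A C

/-- `A ∈ M_l(ℓ²(H))`. -/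
def MemMl (A : ℕ → ℕ → (H →L[ℂ] H)) : Prop :=
  ∃ C, 0 ≤ C ∧ MlBoundedBy A C

/-- A matrix polynomial: supported on finitely many diagonals, with uniformly
bounded operator entries. -/
def IsMatPoly (A : ℕ → ℕ → (H →L[ℂ] H)) : Prop :=
  (∃ N : ℕ, ∀ k j : ℕ, N < ((j : ℤ) - (k : ℤ)).natAbs → A k j = 0) ∧
    ∃ M : ℝ, ∀ k j : ℕ, ‖A k j‖ ≤ M

/-- `A ∈ L¹_r(ℓ²(H))`: `A` is a right Schur multiplier lying in the closure of the
matrix polynomials in the right multiplier norm. -/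
def MemL1r (A : ℕ → ℕ → (H →L[ℂ] H)) : Prop :=
  MemMr A ∧ ∀ ε : ℝ, 0 < ε → ∃ P : ℕ → ℕ → (H →L[ℂ] H),
    IsMatPoly P ∧ MrBoundedBy (fun k j => A k j - P k j) ε

/-- `A ∈ L¹_l(ℓ²(H))`: `A` is a left Schur multiplier lying in the closure of the
matrix polynomials in the left multiplier norm. -/
def MemL1l (A : ℕ → ℕ → (H →L[ℂ] H)) : Prop :=
  MemMl A ∧ ∀ ε : ℝ, 0 < ε → ∃ P : ℕ → ℕ → (H →L[ℂ] H),
    IsMatPoly P ∧ MlBoundedBy (fun k j => A k j - P k j) ε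


open MeasureTheory Topology

section SchurBounds

variable {E : Type*} [NormedAddCommGroup E] [InnerProductSpace ℂ E]

theorem SchurBoundedBy.mono {A : ℕ → ℕ → (E →L[ℂ] E)} {C C' : ℝ} (hA : SchurBoundedBy A C)
    (h : C ≤ C') : SchurBoundedBy A C' :=
  fun F G x y => (hA F G x y).trans (by gcongr)

theorem MrBoundedBy.mono {A : ℕ → ℕ → (E →L[ℂ] E)} {C C' : ℝ} (hA : MrBoundedBy A C)
    (h : C ≤ C') : MrBoundedBy A C' :=
  fun B D hD hB => (hA B D hD hB).mono (mul_le_mul_of_nonneg_right h hD)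

theorem SchurBoundedBy.smul {A : ℕ → ℕ → (E →L[ℂ] E)} {C : ℝ} (hA : SchurBoundedBy A C)
    (c : ℂ) : SchurBoundedBy (fun k j => c • A k j) (‖c‖ * C) := by
  intro F G x y
  simp only [smul_apply, inner_smul_left, ← Finset.mul_sum, norm_mul, RCLike.norm_conj, mul_assoc]
  exact mul_le_mul_of_nonneg_left (by simpa only [mul_assoc] using hA F G x y) (norm_nonneg c)

theorem SchurBoundedBy.schur_const {B : ℕ → ℕ → (E →L[ℂ] E)} {D : ℝ} (hB : SchurBoundedBy B D)
    (hD : 0 ≤ D) (L : E →L[ℂ] E) : SchurBoundedBy (schur B fun _ _ => L) (D * ‖L‖) := by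
  intro F G x y
  have hLx : √(∑ j ∈ F, ‖L (x j)‖ ^ 2) ≤ ‖L‖ * √(∑ j ∈ F, ‖x j‖ ^ 2) := by
    rw [← Real.sqrt_sq (norm_nonneg L), ← Real.sqrt_mul (sq_nonneg _), Finset.mul_sum]
    gcongr with j
    rw [← mul_pow]
    gcongr
    exact L.le_opNorm (x j)
  calc _ ≤ D * √(∑ j ∈ F, ‖L (x j)‖ ^ 2) * √(∑ k ∈ G, ‖y k‖ ^ 2) := hB F G (fun j => L (x j)) y
    _ ≤ D * (‖L‖ * √(∑ j ∈ F, ‖x j‖ ^ 2)) * √(∑ k ∈ G, ‖y k‖ ^ 2) := by gcongr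
    _ = _ := by ring

theorem SchurBoundedBy.diagonal_unitary_conj {A : ℕ → ℕ → (E →L[ℂ] E)} {C : ℝ}
    (hA : SchurBoundedBy A C) {u v : ℕ → ℂ} (hu : ∀ j, ‖u j‖ = 1) (hv : ∀ k, ‖v k‖ = 1) :
    SchurBoundedBy (fun k j => (starRingEnd ℂ (v k) * u j) • A k j) C := by
  intro F G x y
  have hform : ∀ k j, (inner ℂ (((starRingEnd ℂ (v k) * u j) • A k j) (x j)) (y k) : ℂ) =
      inner ℂ (A k j (u j • x j)) (v k • y k) := by
    intro k j
    simp only [smul_apply, ContinuousLinearMap.map_smul, inner_smul_left, inner_smul_right,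
      map_mul, RCLike.conj_conj]
    ring
  simp only [hform]
  simpa only [norm_smul, hu, hv, one_mul] using hA F G (fun j => u j • x j) (fun k => v k • y k)

theorem SchurBoundedBy.integral [CompleteSpace E] {X : Type*} [MeasurableSpace X] {μ : Measure X}
    {M : X → ℕ → ℕ → (E →L[ℂ] E)} {c : X → ℝ} (hM : ∀ k j, Integrable (fun t => M t k j) μ)
    (hc : Integrable c μ) (hMc : ∀ᵐ t ∂μ, SchurBoundedBy (M t) (c t)) :
    SchurBoundedBy (fun k j => ∫ t, M t k j ∂μ) (∫ t, c t ∂μ) := by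
  intro F G x y
  have happly : ∀ k j, Integrable (fun t => M t k j (x j)) μ :=
    fun k j => (hM k j).apply_continuousLinearMap (x j)
  have hentry : ∀ k j, (inner ℂ ((∫ t, M t k j ∂μ) (x j)) (y k) : ℂ) =
      ∫ t, inner ℂ (M t k j (x j)) (y k) ∂μ := by
    intro k j
    rw [ContinuousLinearMap.integral_apply (hM k j), ← inner_conj_symm,
      ← integral_inner (happly k j), ← integral_conj]
    simp only [inner_conj_symm]
  have hint : ∀ k j, Integrable (fun t => (inner ℂ (M t k j (x j)) (y k) : ℂ)) μ := by
    intro k j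
    exact (happly k j).inner_const (y k)
  simp only [hentry]
  rw [Finset.sum_congr rfl fun k _ => (integral_finsetSum F fun j _ => hint k j).symm,
    ← integral_finsetSum G fun k _ => integrable_finsetSum F fun j _ => hint k j]
  calc _ ≤ ∫ t, c t * √(∑ j ∈ F, ‖x j‖ ^ 2) * √(∑ k ∈ G, ‖y k‖ ^ 2) ∂μ :=
        norm_integral_le_of_norm_le ((hc.mul_const _).mul_const _)
          (hMc.mono fun t ht => ht F G x y)
    _ = _ := by rw [integral_mul_const, integral_mul_const]

theorem SchurBoundedBy.of_tendsto {ι : Type*} {l : Filter ι} [l.NeBot]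
    {A : ι → ℕ → ℕ → (E →L[ℂ] E)} {A₀ : ℕ → ℕ → (E →L[ℂ] E)} {C : ℝ}
    (hA : ∀ k j, Tendsto (fun i => A i k j) l (𝓝 (A₀ k j)))
    (h : ∀ᶠ i in l, SchurBoundedBy (A i) C) : SchurBoundedBy A₀ C := by
  intro F G x y
  refine le_of_tendsto (Tendsto.norm ?_) (h.mono fun i hi => hi F G x y)
  refine tendsto_finsetSum _ fun k _ => tendsto_finsetSum _ fun j _ => ?_
  have hcont : Continuous fun L : E →L[ℂ] E => (inner ℂ (L (x j)) (y k) : ℂ) := by fun_prop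
  exact (hcont.tendsto _).comp (hA k j)

theorem MrBoundedBy.of_tendsto {ι : Type*} {l : Filter ι} [l.NeBot]
    {A : ι → ℕ → ℕ → (E →L[ℂ] E)} {A₀ : ℕ → ℕ → (E →L[ℂ] E)} {C : ℝ}
    (hA : ∀ k j, Tendsto (fun i => A i k j) l (𝓝 (A₀ k j)))
    (h : ∀ᶠ i in l, MrBoundedBy (A i) C) : MrBoundedBy A₀ C :=
  fun B D hD hB => SchurBoundedBy.of_tendsto
    (fun k j => ((ContinuousLinearMap.compL ℂ E E E (B k j)).continuous.tendsto _).comp (hA k j))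
    (h.mono fun _ hi => hi B D hD hB)

end SchurBounds

def upperToeplitz {α : Type*} [Zero α] (c : ℕ → α) (k j : ℕ) : α :=
  if k ≤ j then c (j - k) else 0

section FourierSeries

variable {V : Type*} [NormedAddCommGroup V] [NormedSpace ℂ V] [CompleteSpace V]

theorem norm_fourier_apply {T : ℝ} (n : ℤ) (x : AddCircle T) : ‖fourier n x‖ = 1 :=
  Circle.norm_coe _

theorem intervalIntegral_fourier {a b : ℝ} (hab : a < b) (m : ℤ) :
    ∫ t in a..b, fourier m (t : AddCircle (b - a)) = if m = 0 then ((b - a : ℝ) : ℂ) else 0 := by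
  have hT : Fact (0 < b - a) := ⟨sub_pos.2 hab⟩
  split_ifs with hm
  · simp [hm]
  · have hderiv := has_antideriv_at_fourier_neg hT (neg_ne_zero.2 hm)
    simp only [neg_neg] at hderiv
    have hcont : Continuous fun t : ℝ => fourier m (t : AddCircle (b - a)) :=
      (fourier m).continuous.comp (AddCircle.continuous_mk' _)
    rw [intervalIntegral.integral_eq_sub_of_hasDerivAt (fun x _ => hderiv x)
      (hcont.intervalIntegrable _ _)]
    have hb : ((b : ℝ) : AddCircle (b - a)) = a := by
      rw [← AddCircle.coe_add_period (b - a) a, add_sub_cancel]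
    rw [hb, sub_self]

theorem fourierCoeffOn_tsum_fourier_smul {a b : ℝ} (hab : a < b) {c : ℤ → V}
    (hc : Summable fun m => ‖c m‖) (n : ℤ) :
    fourierCoeffOn hab (fun t => ∑' m, fourier m (t : AddCircle (b - a)) • c m) n = c n := by
  have hcoe : Continuous ((↑) : ℝ → AddCircle (b - a)) := AddCircle.continuous_mk' _
  let f : ℤ → C(ℝ, V) := fun m =>
    ⟨fun t => fourier (-n + m) (t : AddCircle (b - a)) • c m,
      ((fourier _).continuous.comp hcoe).smul continuous_const⟩
  have hf : Summable fun m =>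
      ‖(f m).restrict (⟨Set.uIcc a b, isCompact_uIcc⟩ : TopologicalSpace.Compacts ℝ)‖ :=
    hc.of_nonneg_of_le (fun _ => norm_nonneg _) fun m =>
      (ContinuousMap.norm_le _ (norm_nonneg _)).2 fun t => by
        simp only [f, ContinuousMap.restrict_apply, ContinuousMap.coe_mk, norm_smul,
          norm_fourier_apply, one_mul, le_refl]
  have hsmul : ∀ t : ℝ, fourier (-n) (t : AddCircle (b - a)) •
      ∑' m, fourier m (t : AddCircle (b - a)) • c m = ∑' m, f m t := by
    intro t
    have hsum : Summable fun m => fourier m (t : AddCircle (b - a)) • c m :=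
      hc.of_norm_bounded fun m => by rw [norm_smul, norm_fourier_apply, one_mul]
    simp only [f, ContinuousMap.coe_mk, fourier_add, mul_smul, hsum.tsum_const_smul]
  rw [fourierCoeffOn_eq_integral]
  simp only [hsmul, ← intervalIntegral.tsum_intervalIntegral_eq_of_summable_norm hf]
  simp only [f, ContinuousMap.coe_mk, intervalIntegral.integral_smul_const,
    intervalIntegral_fourier hab, neg_add_eq_zero, ite_smul, zero_smul]
  rw [tsum_ite_eq', Complex.coe_smul, smul_smul, one_div, inv_mul_cancel₀ (sub_pos.2 hab).ne',
    one_smul]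

theorem fourierCoeffOn_tsum_nat_fourier_smul {a b : ℝ} (hab : a < b) {c : ℕ → V}
    (hc : Summable fun l => ‖c l‖) (k j : ℕ) :
    fourierCoeffOn hab (fun t => ∑' l : ℕ, fourier (l : ℤ) (t : AddCircle (b - a)) • c l)
      ((j : ℤ) - k) = upperToeplitz c k j := by
  set c' : ℤ → V := Function.extend ((↑) : ℕ → ℤ) c 0
  have hc'_nat : ∀ l : ℕ, c' l = c l := Nat.cast_injective.extend_apply c 0
  have hc'_neg : ∀ m : ℤ, m ∉ Set.range ((↑) : ℕ → ℤ) → c' m = 0 :=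
    fun m hm => Function.extend_apply' _ _ _ hm
  have hc' : Summable fun m => ‖c' m‖ :=
    (Nat.cast_injective.summable_iff fun m hm => by rw [hc'_neg m hm, norm_zero]).1
      (by simpa only [Function.comp_def, hc'_nat] using hc)
  have hseries : ∀ t : ℝ, ∑' l : ℕ, fourier (l : ℤ) (t : AddCircle (b - a)) • c l =
      ∑' m : ℤ, fourier m (t : AddCircle (b - a)) • c' m := by
    intro t
    simp only [← hc'_nat]
    refine Nat.cast_injective.tsum_eq
      (f := fun m : ℤ => fourier m (t : AddCircle (b - a)) • c' m) fun m hm => ?_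
    by_contra hrange
    exact hm (by simp only [hc'_neg m hrange, smul_zero])
  simp only [hseries]
  rw [fourierCoeffOn_tsum_fourier_smul hab hc', upperToeplitz]
  split_ifs with hkj
  · rw [← Nat.cast_sub hkj, hc'_nat]
  · refine hc'_neg _ ?_
    rintro ⟨l, hl⟩
    omega

end FourierSeries

theorem tendsto_upperToeplitz_pow_smul {V : Type*} [NormedAddCommGroup V] [NormedSpace ℂ V]
    (c : ℕ → V) (k j : ℕ) :
    Tendsto (fun r : ℝ => upperToeplitz (fun l => (r : ℂ) ^ l • c l) k j) (𝓝 1)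
      (𝓝 (upperToeplitz c k j)) := by
  unfold upperToeplitz
  split_ifs
  · have hcont : Continuous fun r : ℝ => (r : ℂ) ^ (j - k) • c (j - k) := by fun_prop
    simpa using hcont.tendsto 1
  · exact tendsto_const_nhds

theorem mrBoundedBy_fourierCoeffOn {E : Type*} [NormedAddCommGroup E] [InnerProductSpace ℂ E]
    [CompleteSpace E] {a b : ℝ} (hab : a < b) {g : ℝ → (E →L[ℂ] E)}
    (hg : IntervalIntegrable g volume a b) :
    MrBoundedBy (fun k j => fourierCoeffOn hab g ((j : ℤ) - k))
      ((b - a)⁻¹ * ∫ t in a..b, ‖g t‖) := by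
  intro B D hD hB
  let e : ℤ → ℝ → ℂ := fun n t => fourier n (t : AddCircle (b - a))
  have he_cont : ∀ n, Continuous (e n) :=
    fun n => (fourier n).continuous.comp (AddCircle.continuous_mk' _)
  have hphase : ∀ (k j : ℕ) t, starRingEnd ℂ (e (-k) t) * e (-j) t = e (-((j : ℤ) - k)) t := by
    intro k j t
    simp only [e, ← fourier_neg, neg_neg, ← fourier_add]
    congr 2
    ring
  have hg' : Integrable g (volume.restrict (Set.Ioc a b)) := hg.1
  have hphase_int : ∀ n, Integrable (fun t => e n t • g t) (volume.restrict (Set.Ioc a b)) :=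
    fun n => hg'.bdd_smul 1 (he_cont n).aestronglyMeasurable
      (ae_of_all _ fun t => (norm_fourier_apply _ _).le)
  let M : ℝ → ℕ → ℕ → (E →L[ℂ] E) := fun t k j =>
    (starRingEnd ℂ (e (-k) t) * e (-j) t) • schur B (fun _ _ => g t) k j
  have hM : ∀ t k j, M t k j = (B k j).comp (e (-((j : ℤ) - k)) t • g t) := by
    intro t k j
    simp only [M, schur, hphase, ContinuousLinearMap.comp_smul]
  have hschur : schur B (fun k j => fourierCoeffOn hab g ((j : ℤ) - k)) =
      fun k j => (((b - a)⁻¹ : ℝ) : ℂ) • ∫ t in Set.Ioc a b, M t k j := by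
    funext k j
    simp only [hM, schur, fourierCoeffOn_eq_integral, intervalIntegral.integral_of_le hab.le]
    have hcomm : ∀ n, ∫ t in Set.Ioc a b, (B k j).comp (e n t • g t) =
        (B k j).comp (∫ t in Set.Ioc a b, e n t • g t) :=
      fun n => (ContinuousLinearMap.compL ℂ E E E (B k j)).integral_comp_comm (hphase_int n)
    rw [hcomm, Complex.coe_smul, one_div, ContinuousLinearMap.comp_smul]
  rw [hschur]
  refine ((SchurBoundedBy.integral (fun k j => ?_) (hg'.norm.const_mul D)
    (ae_of_all _ fun t => ?_)).smul _).mono (le_of_eq ?_)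
  · simp only [hM]
    exact (ContinuousLinearMap.compL ℂ E E E (B k j)).integrable_comp (hphase_int _)
  · exact (hB.schur_const hD (g t)).diagonal_unitary_conj (fun j => norm_fourier_apply _ _)
      (fun k => norm_fourier_apply _ _)
  · rw [Complex.norm_real, Real.norm_of_nonneg (inv_nonneg.2 (sub_pos.2 hab).le),
      integral_const_mul, intervalIntegral.integral_of_le hab.le]
    ring

open Real in
theorem mrBoundedBy_upperToeplitz_of_summable_norm {E : Type*} [NormedAddCommGroup E]
    [InnerProductSpace ℂ E] [CompleteSpace E] {c : ℕ → (E →L[ℂ] E)} (hc : Summable fun l => ‖c l‖) :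
    MrBoundedBy (upperToeplitz c)
      ((2 * π)⁻¹ * ∫ t in (-π)..π, ‖∑' l : ℕ, Complex.exp (t * Complex.I) ^ l • c l‖) := by
  have hfourier : ∀ (l : ℕ) (t : ℝ),
      fourier (l : ℤ) (t : AddCircle (π - -π)) = Complex.exp (t * Complex.I) ^ l := by
    intro l t
    rw [fourier_coe_apply, ← Complex.exp_nat_mul]
    congr 1
    push_cast
    field_simp
    ring
  have hcont : Continuous fun t : ℝ => ∑' l : ℕ, fourier (l : ℤ) (t : AddCircle (π - -π)) • c l :=
    continuous_tsum (fun l => ((fourier _).continuous.comp (AddCircle.continuous_mk' _)).smul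
      continuous_const) hc fun l t => by rw [norm_smul, norm_fourier_apply, one_mul]
  have h := mrBoundedBy_fourierCoeffOn (neg_lt_self pi_pos) (hcont.intervalIntegrable (-π) π)
  simp only [fourierCoeffOn_tsum_nat_fourier_smul _ hc] at h
  simpa only [hfourier, sub_neg_eq_add, ← two_mul] using h

open Real in
theorem uppertriangular_toeplitz_H1_general (T : ℕ → (H →L[ℂ] H))
    (hbdd : ∃ M : ℝ, ∀ l : ℕ, ‖T l‖ ≤ M) (C : ℝ)
    (hH1 : ∀ r : ℝ, 0 < r → r < 1 →
      (2 * π)⁻¹ * ∫ t in (-π)..π,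
        ‖∑' l : ℕ, ((r : ℂ) * Complex.exp (t * Complex.I)) ^ l • T l‖ ≤ C) :
    MrBoundedBy
      (fun k j => if k ≤ j then T (j - k) else 0) C := by
  obtain ⟨M, hM⟩ := hbdd
  refine MrBoundedBy.of_tendsto (l := 𝓝[<] 1)
    (fun k j => (tendsto_upperToeplitz_pow_smul T k j).mono_left nhdsWithin_le_nhds) ?_
  filter_upwards [Ioo_mem_nhdsLT one_pos] with r ⟨hr0, hr1⟩
  have hsum : Summable fun l => ‖(r : ℂ) ^ l • T l‖ :=
    ((summable_geometric_of_lt_one hr0.le hr1).mul_left M).of_nonneg_of_le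
      (fun _ => norm_nonneg _) fun l => by
        rw [norm_smul, norm_pow, Complex.norm_real, Real.norm_of_nonneg hr0.le, mul_comm]
        exact mul_le_mul_of_nonneg_right (hM l) (pow_nonneg hr0.le l)
  refine (mrBoundedBy_upperToeplitz_of_summable_norm hsum).mono
    (le_of_eq_of_le ?_ (hH1 r hr0 hr1))
  simp only [mul_pow, mul_smul, smul_comm ((r : ℂ) ^ _)]

open Real in
/-- If `A = (T_{j−k})` is an upper triangular Toeplitz matrix with `sup_l ‖T_l‖ < ∞` and
`G_A(z) = ∑_{l≥0} T_l z^l` belongs to `H¹(𝔻, B(H))` with `‖G_A‖_{H¹} ≤ C`, then `A` is a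
right Schur multiplier with `‖A‖_{M_r(ℓ²(H))} ≤ C ( = ‖G_A‖_{H¹(𝔻,B(H))})`. -/
theorem uppertriangular_toeplitz_H1 (T : ℕ → (H →L[ℂ] H))
    (hbdd : ∃ M : ℝ, ∀ l : ℕ, ‖T l‖ ≤ M) (C : ℝ) (hC : 0 ≤ C)
    (hH1 : ∀ r : ℝ, 0 < r → r < 1 →
      (2 * π)⁻¹ * ∫ t in (-π)..π,
        ‖∑' l : ℕ, ((r : ℂ) * Complex.exp (t * Complex.I)) ^ l • T l‖ ≤ C) :
    MrBoundedBy
      (fun k j => if k ≤ j then T (j - k) else 0) C :=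
  uppertriangular_toeplitz_H1_general T hbdd C hH1
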